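/- Under the expected value premium principle with multiplicative jumps K(t,z) = k(t)z, the first-order system H = 0, H̃ = 0 decouples: setting φ = u + wk(t), the equation H = 0 becomes ∫₀^∞ z e^{γB(t,T)zφ} dF(z) = (1+θ_R)E[Z], with unique solution φ*(t) independent of y and of w; and substituting into H̃ = 0 yields the explicit solution w̄(t,y) = (μ(t)-r(t))/(γB(t,T)σ²(t)) - λ(t,y)k(t)(1+θ_R)E[Z]/(γB(t,T)σ²(t)), and ū(t,y) = φ*(t) - w̄(t,y)k(t). -/

import Mathlib

open MeasureTheory Real Set

/-!
Since `F` is carried by `[0, D]` and not concentrated at `0`, the map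
`φ ↦ ∫ z e^{bzφ} dF(z)` is strictly increasing for `b > 0`, which gives uniqueness of `φ*`.
With `φ = u + wk` both first-order conditions only see `u` through `φ`, so at `ū + w̄k = φ*`
the first one holds by the choice of `φ*` and the second becomes linear in `w̄`.
-/

lemma ae_mem_Icc_of_measure_Iio_of_measure_Ioi {α : Type*} [LinearOrder α] [MeasurableSpace α]
    {μ : Measure α} {a b : α} (ha : μ (Iio a) = 0) (hb : μ (Ioi b) = 0) :
    ∀ᵐ x ∂μ, x ∈ Icc a b := by
  refine measure_mono_null (fun x hx => ?_) (measure_union_null ha hb)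
  exact (not_and_or.1 hx).imp not_le.1 not_le.1

lemma measure_Ioi_ne_zero_of_measure_singleton_lt_one {α : Type*} [LinearOrder α]
    [MeasurableSpace α] [MeasurableSingletonClass α] {μ : Measure α} [IsProbabilityMeasure μ]
    {a : α} (ha : μ (Iio a) = 0) (h : μ {a} < 1) : μ (Ioi a) ≠ 0 := by
  intro hIoi
  have : μ {a}ᶜ = 0 := by rw [← Iio_union_Ioi]; exact measure_union_null ha hIoi
  exact h.ne ((prob_compl_eq_zero_iff (measurableSet_singleton a)).1 this)

lemma Continuous.integrable_of_ae_mem_compact {X : Type*} [TopologicalSpace X] [T2Space X]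
    [MeasurableSpace X] [OpensMeasurableSpace X] {μ : Measure X} [IsFiniteMeasureOnCompacts μ]
    {K : Set X} {f : X → ℝ} (hf : Continuous f) (hK : IsCompact K) (hμK : ∀ᵐ x ∂μ, x ∈ K) :
    Integrable f μ := by
  rw [← Measure.restrict_eq_self_of_ae_mem hμK]
  exact hf.continuousOn.integrableOn_compact hK

lemma integral_lt_integral_of_ae_le_of_measure_setOf_lt_ne_zero {α : Type*} [MeasurableSpace α]
    {μ : Measure α} {f g : α → ℝ} (hf : Integrable f μ) (hg : Integrable g μ) (hle : f ≤ᵐ[μ] g)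
    (hlt : μ {x | f x < g x} ≠ 0) : ∫ x, f x ∂μ < ∫ x, g x ∂μ := by
  have hnonneg : 0 ≤ᵐ[μ] g - f := by filter_upwards [hle] with x hx using sub_nonneg.2 hx
  have hpos : 0 < ∫ x, (g - f) x ∂μ := by
    rw [integral_pos_iff_support_of_nonneg_ae hnonneg (hg.sub hf)]
    refine (pos_iff_ne_zero.2 hlt).trans_le (measure_mono fun x hx => ?_)
    exact sub_ne_zero.2 (ne_of_gt hx)
  rw [Pi.sub_def, integral_sub hg hf] at hpos
  linarith

lemma strictMono_integral_mul_exp {μ : Measure ℝ} [IsFiniteMeasure μ] {b D : ℝ} (hb : 0 < b)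
    (hμ : ∀ᵐ z ∂μ, z ∈ Icc 0 D) (hμpos : μ (Ioi 0) ≠ 0) :
    StrictMono fun φ => ∫ z, z * exp (b * z * φ) ∂μ := by
  have hint (φ : ℝ) : Integrable (fun z => z * exp (b * z * φ)) μ :=
    Continuous.integrable_of_ae_mem_compact (by fun_prop) isCompact_Icc hμ
  intro φ₁ φ₂ hφ
  refine integral_lt_integral_of_ae_le_of_measure_setOf_lt_ne_zero (hint φ₁) (hint φ₂) ?_
    (fun h => hμpos (measure_mono_null (fun z (hz : 0 < z) => ?_) h))
  · filter_upwards [hμ] with z hz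
    have hz0 := hz.1
    gcongr
  · show z * exp (b * z * φ₁) < z * exp (b * z * φ₂)
    gcongr

theorem stmt_13_general (b σ lamv k θ μ r EZ D φs wb ub : ℝ)
    (hb : 0 < b) (hσ : 0 < σ)
    (F : Measure ℝ) [IsProbabilityMeasure F] (hF0 : F (Set.Iio 0) = 0)
    (hFD : F (Set.Ioi D) = 0) (hFnot0 : F {0} < 1)
    (hφs : ∫ z, z * Real.exp (b * z * φs) ∂F = (1 + θ) * EZ)
    (hwb : wb = (μ - r) / (b * σ ^ 2) - lamv * k * (1 + θ) * EZ / (b * σ ^ 2))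
    (hub : ub = φs - wb * k) :
    (∃! φ : ℝ, ∫ z, z * Real.exp (b * z * φ) ∂F = (1 + θ) * EZ) ∧
      lamv * (-(1 + θ) * EZ
          + ∫ z, z * Real.exp (b * (z * ub + wb * k * z)) ∂F) = 0 ∧
      b * σ ^ 2 * wb - (μ - r)
          + k * lamv * ∫ z, z * Real.exp (b * z * (ub + wb * k)) ∂F = 0 := by
  have hmono := strictMono_integral_mul_exp hb (ae_mem_Icc_of_measure_Iio_of_measure_Ioi hF0 hFD)
    (measure_Ioi_ne_zero_of_measure_singleton_lt_one hF0 hFnot0)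
  have hφ : ub + wb * k = φs := by rw [hub]; ring
  refine ⟨⟨φs, hφs, fun φ h => hmono.injective (h.trans hφs.symm)⟩, ?_, ?_⟩
  · have hexp (z : ℝ) : b * (z * ub + wb * k * z) = b * z * φs := by rw [← hφ]; ring
    simp_rw [hexp, hφs]
    ring
  · have hbσ : b * σ ^ 2 ≠ 0 := by positivity
    rw [hφ, hφs, hwb]
    field_simp
    ring

/-- Corollary 5.9: under the expected value premium principle with multiplicative
jumps K(t,z) = k z, the first-order system decouples via φ = u + w k; the equation
∫ z e^{bzφ} dF = (1+θ_R)E[Z] has a unique solution φ*, and the pair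
(ū, w̄) = (φ* - w̄ k, (μ-r)/(bσ²) - λ k (1+θ_R)E[Z]/(bσ²)) solves H = 0, H̃ = 0. -/
theorem stmt_13 (b σ lamv k θ μ r EZ D φs wb ub : ℝ)
    (hb : 0 < b) (hσ : 0 < σ) (hlam : 0 < lamv) (hθ : 0 < θ) (hD : 0 < D)
    (hk : 0 < k) (hkD : k < 1 / D)
    (F : Measure ℝ) [IsProbabilityMeasure F] (hF0 : F (Set.Iio 0) = 0)
    (hFD : F (Set.Ioi D) = 0) (hFnot0 : F {0} < 1)
    (hEZ : EZ = ∫ z, z ∂F) (hEZpos : 0 < EZ)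
    (hφs : ∫ z, z * Real.exp (b * z * φs) ∂F = (1 + θ) * EZ)
    (hwb : wb = (μ - r) / (b * σ ^ 2) - lamv * k * (1 + θ) * EZ / (b * σ ^ 2))
    (hub : ub = φs - wb * k) :
    (∃! φ : ℝ, ∫ z, z * Real.exp (b * z * φ) ∂F = (1 + θ) * EZ) ∧
      lamv * (-(1 + θ) * EZ
          + ∫ z, z * Real.exp (b * (z * ub + wb * k * z)) ∂F) = 0 ∧
      b * σ ^ 2 * wb - (μ - r)
          + k * lamv * ∫ z, z * Real.exp (b * z * (ub + wb * k)) ∂F = 0 :=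
  stmt_13_general b σ lamv k θ μ r EZ D φs wb ub hb hσ F hF0 hFD hFnot0 hφs hwb hub
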